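/- arXiv:2111.01643 — 2 statements merged into one kernel-verified Lean document; each statement's English description precedes it below -/
import Mathlib

section
/- For all ψ₁, φ₁ ∈ H₁ and ψ₂, φ₂ ∈ H₂ one has the identity B((ψ₁,ψ₂),(φ₁,φ₂)) = ⟨ψ₁ − p₁ψ₁, φ₁ − p₁φ₁⟩₁ + ⟨ψ₂ − p₂ψ₂, φ₂ − p₂φ₂⟩₂ + ⟨U(p₁ψ₁) + p₂ψ₂, U(p₁φ₁) + p₂φ₂⟩₂; equivalently, B((ψ₁,ψ₂),(φ₁,φ₂)) = ⟨Φ(ψ₁,ψ₂), Φ(φ₁,φ₂)⟩, where the right-hand side is the inner product of the product Hilbert space H₁ × H₂ × H₂. -/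
open scoped InnerProductSpace ComplexConjugate

noncomputable section

variable {H₁ H₂ : Type*}
  [NormedAddCommGroup H₁] [InnerProductSpace ℂ H₁]
  [NormedAddCommGroup H₂] [InnerProductSpace ℂ H₂]

/-- The pre-inner product `B` on `H₁ × H₂` of the minimally glued one-particle structure. -/
def gluedForm (O₁ : Submodule ℂ H₁) (O₂ : Submodule ℂ H₂)
    [O₁.HasOrthogonalProjection] [O₂.HasOrthogonalProjection]
    (U : O₁ ≃ₗᵢ[ℂ] O₂) (x y : H₁ × H₂) : ℂ :=
  ⟪x.1, y.1⟫_ℂ + ⟪x.2, y.2⟫_ℂ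
    + ⟪x.1, (U.symm (Submodule.orthogonalProjectionOnto O₂ y.2) : H₁)⟫_ℂ
    + ⟪x.2, (U (Submodule.orthogonalProjectionOnto O₁ y.1) : H₂)⟫_ℂ

/-- The map `Φ : H₁ × H₂ → H₁ × H₂ × H₂`,
`Φ(ψ₁,ψ₂) = (ψ₁ − p₁ψ₁, ψ₂ − p₂ψ₂, U(p₁ψ₁) + p₂ψ₂)`. -/
def gluedMap (O₁ : Submodule ℂ H₁) (O₂ : Submodule ℂ H₂)
    [O₁.HasOrthogonalProjection] [O₂.HasOrthogonalProjection]
    (U : O₁ ≃ₗᵢ[ℂ] O₂) (x : H₁ × H₂) : H₁ × H₂ × H₂ :=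
  (x.1 - (Submodule.orthogonalProjectionOnto O₁ x.1 : H₁),
   x.2 - (Submodule.orthogonalProjectionOnto O₂ x.2 : H₂),
   (U (Submodule.orthogonalProjectionOnto O₁ x.1) : H₂) + (Submodule.orthogonalProjectionOnto O₂ x.2 : H₂))

/-- The inner product of the product Hilbert space `H₁ × H₂ × H₂`. -/
def prodInner (x y : H₁ × H₂ × H₂) : ℂ :=
  ⟪x.1, y.1⟫_ℂ + ⟪x.2.1, y.2.1⟫_ℂ + ⟪x.2.2, y.2.2⟫_ℂ


/-! Writing each vector as `x = (x - p x) + p x` with orthogonal summands, the diagonal terms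
`⟪ψᵢ, φᵢ⟫` of `B` split as `⟪ψᵢ - pᵢψᵢ, φᵢ - pᵢφᵢ⟫ + ⟪pᵢψᵢ, pᵢφᵢ⟫`, while in the two cross terms
only the projections survive. Since `U` is an isometry, `⟪p₁ψ₁, p₁φ₁⟫ = ⟪Up₁ψ₁, Up₁φ₁⟫` and
`⟪ψ₁, U⁻¹p₂φ₂⟫ = ⟪Up₁ψ₁, p₂φ₂⟫`, and the four remaining terms are exactly the expansion of
`⟪Up₁ψ₁ + p₂ψ₂, Up₁φ₁ + p₂φ₂⟫`. -/

section OrthogonalProjection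

variable {𝕜 E F : Type*} [RCLike 𝕜]
  [NormedAddCommGroup E] [InnerProductSpace 𝕜 E] [NormedAddCommGroup F] [InnerProductSpace 𝕜 F]
  (K : Submodule 𝕜 E) [K.HasOrthogonalProjection]

theorem Submodule.inner_coe_eq_inner_orthogonalProjectionOnto (x : E) (u : K) :
    ⟪x, (u : E)⟫_𝕜 = ⟪(K.orthogonalProjectionOnto x : E), (u : E)⟫_𝕜 := by
  rw [← K.coe_inner, K.inner_orthogonalProjectionOnto_eq_of_mem_right]

theorem Submodule.inner_eq_inner_sub_orthogonalProjectionOnto_add (x y : E) :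
    ⟪x, y⟫_𝕜 = ⟪x - (K.orthogonalProjectionOnto x : E), y - (K.orthogonalProjectionOnto y : E)⟫_𝕜
      + ⟪(K.orthogonalProjectionOnto x : E), (K.orthogonalProjectionOnto y : E)⟫_𝕜 := by
  have hx := K.inner_coe_eq_inner_orthogonalProjectionOnto x (K.orthogonalProjectionOnto y)
  have hy : ⟪(K.orthogonalProjectionOnto x : E), y⟫_𝕜 =
      ⟪(K.orthogonalProjectionOnto x : E), (K.orthogonalProjectionOnto y : E)⟫_𝕜 := by
    rw [← K.coe_inner, K.inner_orthogonalProjectionOnto_eq_of_mem_left]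
  simp only [inner_sub_left, inner_sub_right, hx, hy]
  ring

theorem LinearIsometryEquiv.inner_coe_symm_apply_eq_inner_orthogonalProjectionOnto
    (U : K ≃ₗᵢ[𝕜] F) (x : E) (w : F) :
    ⟪x, (U.symm w : E)⟫_𝕜 = ⟪U (K.orthogonalProjectionOnto x), w⟫_𝕜 := by
  rw [K.inner_coe_eq_inner_orthogonalProjectionOnto, ← K.coe_inner, ← U.inner_map_map,
    U.apply_symm_apply]

end OrthogonalProjection

theorem gluedForm_eq (O₁ : Submodule ℂ H₁) (O₂ : Submodule ℂ H₂)
    [O₁.HasOrthogonalProjection] [O₂.HasOrthogonalProjection]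
    (U : O₁ ≃ₗᵢ[ℂ] O₂) (ψ₁ φ₁ : H₁) (ψ₂ φ₂ : H₂) :
    gluedForm O₁ O₂ U (ψ₁, ψ₂) (φ₁, φ₂) =
      ⟪ψ₁ - (Submodule.orthogonalProjectionOnto O₁ ψ₁ : H₁),
        φ₁ - (Submodule.orthogonalProjectionOnto O₁ φ₁ : H₁)⟫_ℂ
      + ⟪ψ₂ - (Submodule.orthogonalProjectionOnto O₂ ψ₂ : H₂),
          φ₂ - (Submodule.orthogonalProjectionOnto O₂ φ₂ : H₂)⟫_ℂ
      + ⟪(U (Submodule.orthogonalProjectionOnto O₁ ψ₁) : H₂) + (Submodule.orthogonalProjectionOnto O₂ ψ₂ : H₂),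
          (U (Submodule.orthogonalProjectionOnto O₁ φ₁) : H₂) + (Submodule.orthogonalProjectionOnto O₂ φ₂ : H₂)⟫_ℂ
    ∧ gluedForm O₁ O₂ U (ψ₁, ψ₂) (φ₁, φ₂) =
        prodInner (gluedMap O₁ O₂ U (ψ₁, ψ₂)) (gluedMap O₁ O₂ U (φ₁, φ₂)) := by
  suffices hB : gluedForm O₁ O₂ U (ψ₁, ψ₂) (φ₁, φ₂) =
      prodInner (gluedMap O₁ O₂ U (ψ₁, ψ₂)) (gluedMap O₁ O₂ U (φ₁, φ₂)) from ⟨hB, hB⟩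
  rw [gluedForm, O₁.inner_eq_inner_sub_orthogonalProjectionOnto_add ψ₁ φ₁,
    O₂.inner_eq_inner_sub_orthogonalProjectionOnto_add ψ₂ φ₂,
    U.inner_coe_symm_apply_eq_inner_orthogonalProjectionOnto,
    O₂.inner_coe_eq_inner_orthogonalProjectionOnto ψ₂, ← O₁.coe_inner, ← U.inner_map_map]
  simp only [prodInner, gluedMap, inner_add_left, inner_add_right, Submodule.coe_inner]
  ring

end
end

section
/- Uniqueness of maximal covers: let X be a set, let c : Set X → Set X be a closure operator on subsets of X (monotone: A ⊆ B implies c(A) ⊆ c(B); extensive: A ⊆ c(A); idempotent: c(c(A)) = c(A)), and let P be a predicate on subsets of X. Call an indexed family {A_j}_{j∈J} of subsets of X, each satisfying P, a maximal P-cover family for c if (i) for every subset U of X with P(U) there exists j ∈ J with U ⊆ c(A_j), and (ii) for all j, j' ∈ J, A_j ⊆ c(A_{j'}) implies c(A_j) = c(A_{j'}). Then any two maximal P-cover families {A_j}_{j∈J} and {B_k}_{k∈K} for c have the same families of closures: { c(A_j) : j ∈ J } = { c(B_k) : k ∈ K } as sets of subsets of X. -/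
section ClosureCover

variable {X J K : Type*} (c : Set X → Set X) (P : Set X → Prop)

structure IsClosureCover (A : J → Set X) : Prop where
  prop : ∀ j, P (A j)
  covers : ∀ U, P U → ∃ j, U ⊆ c (A j)

structure IsMaximalClosureCover (A : J → Set X) : Prop extends IsClosureCover c P A where
  closure_eq_of_subset : ∀ j j', A j ⊆ c (A j') → c (A j) = c (A j')

variable {c P}

theorem closure_subset_of_subset_closure (hmono : ∀ A B : Set X, A ⊆ B → c A ⊆ c B)
    (hidem : ∀ A : Set X, c (c A) = c A) {A B : Set X} (h : A ⊆ c B) : c A ⊆ c B :=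
  hidem B ▸ hmono _ _ h

theorem IsMaximalClosureCover.range_subset (hmono : ∀ A B : Set X, A ⊆ B → c A ⊆ c B)
    (hidem : ∀ A : Set X, c (c A) = c A) {A : J → Set X} {B : K → Set X}
    (hA : IsMaximalClosureCover c P A) (hB : IsClosureCover c P B) :
    Set.range (fun j => c (A j)) ⊆ Set.range (fun k => c (B k)) := by
  rintro _ ⟨j, rfl⟩
  obtain ⟨k, hAB⟩ := hB.covers (A j) (hA.prop j)
  obtain ⟨j', hBA⟩ := hA.covers (B k) (hB.prop k)
  -- `A j` lies in the closure of `A j'`, so maximality identifies their closures.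
  have hj : c (A j) = c (A j') := hA.closure_eq_of_subset j j'
    (hAB.trans (closure_subset_of_subset_closure hmono hidem hBA))
  refine ⟨k, (closure_subset_of_subset_closure hmono hidem hAB).antisymm' ?_⟩
  exact closure_subset_of_subset_closure hmono hidem (hj ▸ hBA)

end ClosureCover

theorem maximal_cover_unique_general {X : Type*} (c : Set X → Set X)
    (hmono : ∀ A B : Set X, A ⊆ B → c A ⊆ c B)
    (hidem : ∀ A : Set X, c (c A) = c A)
    (P : Set X → Prop)
    {J K : Type*} (A : J → Set X) (B : K → Set X)
    (hPA : ∀ j : J, P (A j)) (hPB : ∀ k : K, P (B k))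
    (hA₁ : ∀ U : Set X, P U → ∃ j : J, U ⊆ c (A j))
    (hA₂ : ∀ j j' : J, A j ⊆ c (A j') → c (A j) = c (A j'))
    (hB₁ : ∀ U : Set X, P U → ∃ k : K, U ⊆ c (B k))
    (hB₂ : ∀ k k' : K, B k ⊆ c (B k') → c (B k) = c (B k')) :
    Set.range (fun j : J => c (A j)) = Set.range (fun k : K => c (B k)) := by
  have hA : IsMaximalClosureCover c P A := ⟨⟨hPA, hA₁⟩, hA₂⟩
  have hB : IsMaximalClosureCover c P B := ⟨⟨hPB, hB₁⟩, hB₂⟩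
  exact (hA.range_subset hmono hidem hB.toIsClosureCover).antisymm
    (hB.range_subset hmono hidem hA.toIsClosureCover)

/-- Uniqueness of maximal covers: if `c` is a closure operator on subsets of `X` (monotone,
extensive, idempotent) and `{A j}` and `{B k}` are two maximal `P`-cover families for `c`
(each member satisfies `P`; every `P`-set is contained in the `c`-closure of some member;
and `A j ⊆ c (A j')` forces `c (A j) = c (A j')`), then the two families have the same
families of closures. -/
theorem maximal_cover_unique {X : Type*} (c : Set X → Set X)
    (hmono : ∀ A B : Set X, A ⊆ B → c A ⊆ c B)
    (hext : ∀ A : Set X, A ⊆ c A)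
    (hidem : ∀ A : Set X, c (c A) = c A)
    (P : Set X → Prop)
    {J K : Type*} (A : J → Set X) (B : K → Set X)
    (hPA : ∀ j : J, P (A j)) (hPB : ∀ k : K, P (B k))
    (hA₁ : ∀ U : Set X, P U → ∃ j : J, U ⊆ c (A j))
    (hA₂ : ∀ j j' : J, A j ⊆ c (A j') → c (A j) = c (A j'))
    (hB₁ : ∀ U : Set X, P U → ∃ k : K, U ⊆ c (B k))
    (hB₂ : ∀ k k' : K, B k ⊆ c (B k') → c (B k) = c (B k')) :
    Set.range (fun j : J => c (A j)) = Set.range (fun k : K => c (B k)) :=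
  maximal_cover_unique_general c hmono hidem P A B hPA hPB hA₁ hA₂ hB₁ hB₂
end
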